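/- arXiv:2509.00468 — 3 statements merged into one kernel-verified Lean document; each statement's English description precedes it below -/
import Mathlib

section
/- Let p, q, n, k be natural numbers with 0 ≤ p < n, 0 < q ≤ n, and define C(k) = (n - p + k + 1)(p + q - 2k) / (2(p + 1 - k)) for 0 ≤ k ≤ min(p, q-1). If q ≥ p + 2, then the minimum of C(k) over 0 ≤ k ≤ min(p, q-1) is attained at k = 0 and equals (n - p + 1)(p + q)/(2(p + 1)). -/
/-- For natural numbers `p < n`, `0 < q ≤ n` with `q ≥ p + 2`, the quantity
`C k = (n - p + k + 1)(p + q - 2k) / (2(p + 1 - k))` (as rational numbers), defined for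
`0 ≤ k ≤ min p (q-1)`, attains its minimum over that range at `k = 0`, with value
`(n - p + 1)(p + q) / (2(p + 1))`. -/
theorem stmt_0 (p q n : ℕ) (hpn : p < n) (hq0 : 0 < q) (hqn : q ≤ n)
    (hq2 : p + 2 ≤ q)
    (C : ℕ → ℚ)
    (hC : ∀ k, k ≤ min p (q - 1) →
      C k = ((n : ℚ) - p + k + 1) * ((p : ℚ) + q - 2 * k) / (2 * ((p : ℚ) + 1 - k)))
    (hden : ∀ k, k ≤ min p (q - 1) → (0 : ℚ) < (p : ℚ) + 1 - k) :
    (∀ k, k ≤ min p (q - 1) → C 0 ≤ C k) ∧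
      C 0 = ((n : ℚ) - p + 1) * ((p : ℚ) + q) / (2 * ((p : ℚ) + 1)) := by
  have h0 : (0:ℕ) ≤ min p (q - 1) := Nat.zero_le _
  have hC0 : C 0 = ((n : ℚ) - p + 1) * ((p : ℚ) + q) / (2 * ((p : ℚ) + 1)) := by
    rw [hC 0 h0]; push_cast; ring_nf
  refine ⟨?_, hC0⟩
  intro k hk
  rw [hC k hk, hC 0 h0]
  have d0 := hden 0 h0
  have dk := hden k hk
  have hkp : (k:ℚ) ≤ p := by exact_mod_cast (le_trans hk (min_le_left _ _))
  have hqp : (p:ℚ) + 2 ≤ q := by exact_mod_cast hq2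
  have hnp : (p:ℚ) + 1 ≤ n := by exact_mod_cast hpn
  have hk0 : (0:ℚ) ≤ k := Nat.cast_nonneg k
  rw [div_le_div_iff₀ (by linarith [d0]) (by linarith [dk])]
  push_cast
  have hE : (0:ℚ) ≤ ((p:ℚ)+1)*(((p:ℚ)+q-2*k-2) - 2*((n:ℚ)-p)) + ((n:ℚ)-p+1)*((p:ℚ)+q) := by
    nlinarith [mul_nonneg (by positivity : (0:ℚ) ≤ (n:ℚ)) (by linarith : (0:ℚ) ≤ (q:ℚ)-p-2),
      mul_nonneg (by positivity : (0:ℚ) ≤ (p:ℚ)+1) (by linarith : (0:ℚ) ≤ (p:ℚ)-k)]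
  have hid : ((n:ℚ) - p + k + 1) * ((p:ℚ) + q - 2 * k) * (2 * ((p:ℚ) + 1 - 0)) -
      ((n:ℚ) - p + 0 + 1) * ((p:ℚ) + q - 2 * 0) * (2 * ((p:ℚ) + 1 - k)) =
      2 * k * (((p:ℚ)+1)*(((p:ℚ)+q-2*k-2) - 2*((n:ℚ)-p)) + ((n:ℚ)-p+1)*((p:ℚ)+q)) := by
    ring
  nlinarith [mul_nonneg hk0 hE, hid]
end

section
/- Let p, q, n be natural numbers with 0 ≤ p < n, 0 < q ≤ n, q ≤ p + 1 and 2p ≤ n. Define C(k) = (n - p + k + 1)(p + q - 2k)/(2(p + 1 - k)) for 0 ≤ k ≤ q - 1. Then the minimum of C(k) over 0 ≤ k ≤ q - 1 is attained at k = q - 1 and equals (n - p + q)/2. -/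
/-- For natural numbers `p < n`, `0 < q ≤ n` with `q ≤ p + 1` and `2p ≤ n`,
the quantity `C k = (n - p + k + 1)(p + q - 2k) / (2(p + 1 - k))` (rational), defined for
`0 ≤ k ≤ q - 1`, attains its minimum over that range at `k = q - 1`, with value
`(n - p + q)/2`. -/
theorem stmt_1 (p q n : ℕ) (hpn : p < n) (hq0 : 0 < q) (hqn : q ≤ n)
    (hq1 : q ≤ p + 1) (hp2 : 2 * p ≤ n)
    (C : ℕ → ℚ)
    (hC : ∀ k, k ≤ q - 1 →
      C k = ((n : ℚ) - p + k + 1) * ((p : ℚ) + q - 2 * k) / (2 * ((p : ℚ) + 1 - k)))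
    (hden : ∀ k, k ≤ q - 1 → (0 : ℚ) < (p : ℚ) + 1 - k) :
    (∀ k, k ≤ q - 1 → C (q - 1) ≤ C k) ∧
      C (q - 1) = ((n : ℚ) - p + q) / 2 := by
  have hqc : ((q - 1 : ℕ) : ℚ) = (q : ℚ) - 1 := by
    have := Nat.cast_sub (R := ℚ) hq0
    simpa using this
  have hdq := hden (q - 1) le_rfl
  rw [hqc] at hdq
  have hval : C (q - 1) = ((n : ℚ) - p + q) / 2 := by
    rw [hC (q - 1) le_rfl, hqc]
    have h2 : (2 : ℚ) * ((p : ℚ) + 1 - ((q : ℚ) - 1)) ≠ 0 := by positivity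
    field_simp
    ring
  refine ⟨fun k hk => ?_, hval⟩
  rw [hval, hC k hk]
  have hdk := hden k hk
  have hkq : (k : ℚ) ≤ (q : ℚ) - 1 := by
    have : (k : ℚ) ≤ ((q - 1 : ℕ) : ℚ) := by exact_mod_cast hk
    rwa [hqc] at this
  have hpn' : (p : ℚ) < n := by exact_mod_cast hpn
  have hp2' : 2 * (p : ℚ) ≤ n := by exact_mod_cast hp2
  have hk0 : (0 : ℚ) ≤ k := by positivity
  rw [div_le_div_iff₀ (by norm_num) (by positivity)]
  nlinarith [mul_nonneg (sub_nonneg.2 hkq) (by nlinarith : (0:ℚ) ≤ (n:ℚ) - 2*p + 2*k)]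
end

section
/- On a Kähler manifold, for any (p,q)-form φ one has the pointwise identity |T_φ|² = 2(q+1)(n−p)|φ|² − 2⟨ΛLφ, φ⟩, where T_φ ∈ Sym²T^{1,0}M ⊗ Λ^{p+1,q−1}T*M is defined by T_φ(α, β) = ι_{β♯}(α ∧ φ) + ι_{α♯}(β ∧ φ) for (1,0)-forms α, β (with ♯ the metric duality to (0,1)-vectors). -/
/-!
Write `ψᵢⱼ = ι_{∂_ī}(dz^j ∧ φ)`. The diagonal part `∑ |ψᵢⱼ|²` is `q (n - p) |φ|²`, since
`∑ᵢ dz̄^i ∧ ι_{∂_ī}` counts the antiholomorphic degree and `∑ⱼ |dz^j ∧ φ|² = (n - p) |φ|²`.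
For the cross part, `⟨ΛLφ, φ⟩ = |Lφ|²`, and the anticommutation relations give
`|∑ᵢ dz̄^i ∧ dz^i ∧ φ|² = (n - p) |φ|² - ∑ ⟨ψᵢⱼ, ψⱼᵢ⟩`.

The cross part also needs `∑ᵢ (dz^i ∧ dz̄^i + dz̄^i ∧ dz^i) = 0`, to rewrite `Lφ` as
`-i ∑ᵢ dz̄^i ∧ dz^i ∧ φ`. This comes from the grading: this operator `M` commutes
with all contractions, hence with its adjoint `G = ∑ᵢ (ι_{∂_i} ι_{∂_ī} + ι_{∂_ī} ι_{∂_i})`,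
which lowers the holomorphic degree. So `|Mx|² = ⟨x, M G x⟩`, which vanishes by induction on
the degree, starting from the vanishing of forms of negative degree.
-/

open scoped InnerProductSpace

theorem commute_mul_add_mul_of_mem_center {A : Type*} [Ring A] {t f g : A}
    (hf : t * f + f * t ∈ Set.center A) (hg : t * g + g * t ∈ Set.center A) :
    Commute t (f * g + g * f) := by
  have key : t * (f * g + g * f) = (f * g + g * f) * t
      + ((t * f + f * t) * g - g * (t * f + f * t))
      + ((t * g + g * t) * f - f * (t * g + g * t)) := by
    noncomm_ring
  rw [Commute, SemiconjBy, key, Set.mem_center_iff.mp hf |>.comm g,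
    Set.mem_center_iff.mp hg |>.comm f]
  abel

theorem Commute.sum_mul_add_mul {A ι : Type*} [Ring A] [Fintype ι] {t : A} {f g : ι → A}
    (hf : ∀ i, t * f i + f i * t ∈ Set.center A) (hg : ∀ i, t * g i + g i * t ∈ Set.center A) :
    Commute t (∑ i, (f i * g i + g i * f i)) :=
  Commute.sum_right _ _ _ fun i _ => commute_mul_add_mul_of_mem_center (hf i) (hg i)

theorem LinearMap.mul_add_mul_mem_center {R M : Type*} [Semiring R] [AddCommGroup M]
    [Module R M] {t f : Module.End R M} (p : Prop) [Decidable p]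
    (h : ∀ x, t (f x) + f (t x) = if p then x else 0) :
    t * f + f * t ∈ Set.center (Module.End R M) := by
  have : t * f + f * t = if p then 1 else 0 := by
    ext x
    rw [LinearMap.add_apply, Module.End.mul_apply, Module.End.mul_apply, h]
    split_ifs <;> rfl
  rw [this]
  split_ifs
  exacts [Set.one_mem_center, Set.zero_mem_center]

theorem sum_apply_eq_card_sub_smul {R M ι : Type*} [Ring R] [AddCommGroup M] [Module R M]
    [Fintype ι] {c w : ι → Module.End R M} (hccr : ∀ i x, c i (w i x) + w i (c i x) = x)
    {a : R} {x : M} (hx : ∑ i, w i (c i x) = a • x) :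
    ∑ i, c i (w i x) = ((Fintype.card ι : R) - a) • x := by
  rw [sub_smul, ← hx]
  refine eq_sub_of_add_eq ?_
  rw [← Finset.sum_add_distrib, Finset.sum_congr rfl fun i _ => hccr i x, Finset.sum_const,
    Finset.card_univ, Nat.cast_smul_eq_nsmul]

theorem commute_sum_mul_add_mul_of_ccr {R M ι : Type*} [Semiring R] [AddCommGroup M]
    [Module R M] [Fintype ι] [DecidableEq ι] {w bw c cbar : ι → Module.End R M}
    (hccr1 : ∀ i j x, c i (w j x) + w j (c i x) = if i = j then x else 0)
    (hccr2 : ∀ i j x, cbar i (bw j x) + bw j (cbar i x) = if i = j then x else 0)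
    (hccr3 : ∀ i j x, c i (bw j x) + bw j (c i x) = 0)
    (hccr4 : ∀ i j x, cbar i (w j x) + w j (cbar i x) = 0) :
    Commute (∑ i, (w i * bw i + bw i * w i)) (∑ i, (c i * cbar i + cbar i * c i)) := by
  have hc_comm k := Commute.sum_mul_add_mul (f := w) (g := bw)
    (fun i => LinearMap.mul_add_mul_mem_center (k = i) (hccr1 k i))
    (fun i => LinearMap.mul_add_mul_mem_center False fun x => (hccr3 k i x).trans (if_neg id).symm)
  have hcbar_comm k := Commute.sum_mul_add_mul (f := w) (g := bw)
    (fun i => LinearMap.mul_add_mul_mem_center False fun x => (hccr4 k i x).trans (if_neg id).symm)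
    (fun i => LinearMap.mul_add_mul_mem_center (k = i) (hccr2 k i))
  exact (Commute.sum_left _ _ _ fun k _ => ((hc_comm k).mul_left (hcbar_comm k)).add_left
    ((hcbar_comm k).mul_left (hc_comm k))).symm

section InnerProduct

variable {V : Type*} [NormedAddCommGroup V] [InnerProductSpace ℂ V] {ι : Type*} [Fintype ι]

theorem inner_swap_of_adjoint {A B : V → V} (h : ∀ x y, ⟪A x, y⟫_ℂ = ⟪x, B y⟫_ℂ) (x y : V) :
    ⟪B x, y⟫_ℂ = ⟪x, A y⟫_ℂ := by
  rw [← inner_conj_symm, ← h, inner_conj_symm]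

theorem sum_inner_self_eq_inner_sum {c w : ι → Module.End ℂ V}
    (hadj : ∀ i x y, ⟪c i x, y⟫_ℂ = ⟪x, w i y⟫_ℂ) (x : V) :
    ∑ i, ⟪c i x, c i x⟫_ℂ = ⟪x, ∑ i, w i (c i x)⟫_ℂ := by
  simp only [hadj, inner_sum]

theorem eq_zero_of_sum_apply_eq_neg_smul {c w : ι → Module.End ℂ V}
    (hadj : ∀ i x y, ⟪c i x, y⟫_ℂ = ⟪x, w i y⟫_ℂ) {a : ℝ} (ha : a < 0) {x : V}
    (hx : ∑ i, w i (c i x) = (a : ℂ) • x) : x = 0 := by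
  have hsum : ∑ i, ‖c i x‖ ^ 2 = a * ‖x‖ ^ 2 := by
    have := congrArg Complex.re (sum_inner_self_eq_inner_sum hadj x)
    simpa [hx, inner_smul_right, inner_self_eq_norm_sq_to_K, ← Complex.ofReal_pow] using this
  have : 0 ≤ a * ‖x‖ ^ 2 := hsum ▸ Finset.sum_nonneg fun i _ => sq_nonneg _
  exact norm_eq_zero.mp <| pow_eq_zero_iff two_ne_zero |>.mp <| by nlinarith [sq_nonneg ‖x‖]

theorem inner_sum_anticomm_apply {f g f' g' : ι → Module.End ℂ V}
    (hf : ∀ i x y, ⟪f i x, y⟫_ℂ = ⟪x, f' i y⟫_ℂ) (hg : ∀ i x y, ⟪g i x, y⟫_ℂ = ⟪x, g' i y⟫_ℂ)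
    (x y : V) :
    ⟪(∑ i, (f i * g i + g i * f i)) x, y⟫_ℂ = ⟪x, (∑ i, (f' i * g' i + g' i * f' i)) y⟫_ℂ := by
  simp only [LinearMap.sum_apply, LinearMap.add_apply, Module.End.mul_apply, sum_inner, inner_sum,
    inner_add_left, inner_add_right, hf, hg, add_comm]

theorem apply_eq_zero_of_commute_adjoint {M G : Module.End ℂ V} {P : ℤ → ℤ → Submodule ℂ V}
    (hadj : ∀ x y, ⟪M x, y⟫_ℂ = ⟪x, G y⟫_ℂ) (hcomm : Commute M G)
    (hG : ∀ a b, ∀ x ∈ P a b, G x ∈ P (a - 1) (b - 1))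
    (hneg : ∀ a b, a < 0 → ∀ x ∈ P a b, x = 0) {a b : ℤ} {x : V} (hx : x ∈ P a b) :
    M x = 0 := by
  obtain ⟨k, hk⟩ : ∃ k : ℕ, a < k := ⟨a.toNat + 1, by omega⟩
  induction k generalizing a b x with
  | zero => rw [hneg a b (by exact_mod_cast hk) x hx, map_zero]
  | succ k ih =>
    have hMG : M (G x) = 0 := ih (hG a b x hx) (by push_cast at hk; omega)
    refine inner_self_eq_zero (𝕜 := ℂ) |>.mp ?_
    rw [hadj, ← Module.End.mul_apply, ← hcomm.eq, Module.End.mul_apply, hMG, inner_zero_right]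

theorem inner_sum_apply_self_of_ccr [DecidableEq ι] {bw cbar : ι → Module.End ℂ V}
    (hadj : ∀ i x y, ⟪cbar i x, y⟫_ℂ = ⟪x, bw i y⟫_ℂ)
    (hccr : ∀ i j x, cbar i (bw j x) + bw j (cbar i x) = if i = j then x else 0) (y : ι → V) :
    ⟪∑ i, bw i (y i), ∑ i, bw i (y i)⟫_ℂ
      = ∑ i, ⟪y i, y i⟫_ℂ - ∑ i, ∑ j, ⟪cbar i (y j), cbar j (y i)⟫_ℂ := by
  have hterm : ∀ i j, ⟪bw i (y i), bw j (y j)⟫_ℂ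
      = (if i = j then ⟪y i, y j⟫_ℂ else 0) - ⟪cbar j (y i), cbar i (y j)⟫_ℂ := by
    intro i j
    rw [inner_swap_of_adjoint (hadj i), eq_sub_of_add_eq (hccr i j (y j)), inner_sub_right,
      hadj j]
    split_ifs <;> simp
  simp only [sum_inner, inner_sum, hterm, Finset.sum_sub_distrib, Finset.sum_ite_eq',
    Finset.mem_univ, if_true]

theorem sum_mul_add_mul_apply_eq_zero_of_ccr [DecidableEq ι] {P : ℤ → ℤ → Submodule ℂ V}
    {w bw c cbar : ι → Module.End ℂ V}
    (hc : ∀ i a b, ∀ x ∈ P a b, c i x ∈ P (a - 1) b)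
    (hcbar : ∀ i a b, ∀ x ∈ P a b, cbar i x ∈ P a (b - 1))
    (hadj1 : ∀ i x y, ⟪c i x, y⟫_ℂ = ⟪x, w i y⟫_ℂ)
    (hadj2 : ∀ i x y, ⟪cbar i x, y⟫_ℂ = ⟪x, bw i y⟫_ℂ)
    (hccr1 : ∀ i j x, c i (w j x) + w j (c i x) = if i = j then x else 0)
    (hccr2 : ∀ i j x, cbar i (bw j x) + bw j (cbar i x) = if i = j then x else 0)
    (hccr3 : ∀ i j x, c i (bw j x) + bw j (c i x) = 0)
    (hccr4 : ∀ i j x, cbar i (w j x) + w j (cbar i x) = 0)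
    (hcount : ∀ a b, ∀ x ∈ P a b, ∑ i, w i (c i x) = (a : ℂ) • x)
    {a b : ℤ} {x : V} (hx : x ∈ P a b) :
    (∑ i, (w i * bw i + bw i * w i)) x = 0 := by
  refine apply_eq_zero_of_commute_adjoint
    (inner_sum_anticomm_apply (fun i => inner_swap_of_adjoint (hadj1 i))
      (fun i => inner_swap_of_adjoint (hadj2 i)))
    (commute_sum_mul_add_mul_of_ccr hccr1 hccr2 hccr3 hccr4)
    (fun a b x hx => ?_) (fun a b ha x hx => ?_) hx
  · simp only [LinearMap.sum_apply, LinearMap.add_apply, Module.End.mul_apply]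
    exact Submodule.sum_mem _ fun i _ => Submodule.add_mem _
      (hc i _ _ _ (hcbar i _ _ x hx)) (hcbar i _ _ _ (hc i _ _ x hx))
  · exact eq_zero_of_sum_apply_eq_neg_smul hadj1 (a := a) (by exact_mod_cast ha)
      (by rw [hcount a b x hx]; norm_cast)

end InnerProduct

theorem stmt_12_general (n p q : ℕ)
    (V : Type*) [NormedAddCommGroup V] [InnerProductSpace ℂ V]
    (P : ℤ → ℤ → Submodule ℂ V)
    (L Lam : Module.End ℂ V) (w bw c cbar : Fin n → Module.End ℂ V)
    (hw : ∀ i (a b : ℤ), ∀ x ∈ P a b, w i x ∈ P (a + 1) b)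
    (hc : ∀ i (a b : ℤ), ∀ x ∈ P a b, c i x ∈ P (a - 1) b)
    (hcbar : ∀ i (a b : ℤ), ∀ x ∈ P a b, cbar i x ∈ P a (b - 1))
    (hadj1 : ∀ i (x y : V), (inner ℂ (c i x) y : ℂ) = inner ℂ x (w i y))
    (hadj2 : ∀ i (x y : V), (inner ℂ (cbar i x) y : ℂ) = inner ℂ x (bw i y))
    (hadjL : ∀ x y : V, (inner ℂ (L x) y : ℂ) = inner ℂ x (Lam y))
    (hccr1 : ∀ i j (x : V), c i (w j x) + w j (c i x) = if i = j then x else 0)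
    (hccr2 : ∀ i j (x : V), cbar i (bw j x) + bw j (cbar i x) = if i = j then x else 0)
    (hccr3 : ∀ i j (x : V), c i (bw j x) + bw j (c i x) = 0)
    (hccr4 : ∀ i j (x : V), cbar i (w j x) + w j (cbar i x) = 0)
    (hLdef : ∀ x : V, L x = Complex.I • ∑ i, w i (bw i x))
    (hcount1 : ∀ (a b : ℤ), ∀ x ∈ P a b, ∑ i, w i (c i x) = (a : ℂ) • x)
    (hcount2 : ∀ (a b : ℤ), ∀ x ∈ P a b, ∑ i, bw i (cbar i x) = (b : ℂ) • x)
    (φ : V) (hφ : φ ∈ P p q) :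
    2 * ∑ i, ∑ j, ((inner ℂ (cbar i (w j φ)) (cbar i (w j φ)) : ℂ)
        + (inner ℂ (cbar i (w j φ)) (cbar j (w i φ)) : ℂ))
      = 2 * ((q : ℂ) + 1) * ((n : ℂ) - p) * ((‖φ‖ : ℂ)) ^ 2
        - 2 * (inner ℂ (Lam (L φ)) φ : ℂ) := by
  have hwφ : ∑ j, ⟪w j φ, w j φ⟫_ℂ = ((n : ℂ) - p) * ⟪φ, φ⟫_ℂ := by
    rw [sum_inner_self_eq_inner_sum fun i => inner_swap_of_adjoint (hadj1 i),
      sum_apply_eq_card_sub_smul (fun i x => by simpa using hccr1 i i x) (hcount1 p q φ hφ),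
      inner_smul_right, Fintype.card_fin, Int.cast_natCast]
  have hdiag : ∑ i, ∑ j, ⟪cbar i (w j φ), cbar i (w j φ)⟫_ℂ = q * ((n - p) * ⟪φ, φ⟫_ℂ) := by
    rw [Finset.sum_comm]
    simp only [sum_inner_self_eq_inner_sum hadj2, hcount2 _ _ _ (hw _ _ _ _ hφ), inner_smul_right,
      ← Finset.mul_sum, hwφ, Int.cast_natCast]
  have hLφ : L φ = -Complex.I • ∑ i, bw i (w i φ) := by
    have hM := sum_mul_add_mul_apply_eq_zero_of_ccr hc hcbar hadj1 hadj2 hccr1 hccr2 hccr3 hccr4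
      hcount1 hφ
    simp only [LinearMap.sum_apply, LinearMap.add_apply, Module.End.mul_apply,
      Finset.sum_add_distrib] at hM
    rw [hLdef, eq_neg_of_add_eq_zero_left hM, smul_neg, neg_smul]
  have hΛL : ⟪Lam (L φ), φ⟫_ℂ
      = (n - p) * ⟪φ, φ⟫_ℂ - ∑ i, ∑ j, ⟪cbar i (w j φ), cbar j (w i φ)⟫_ℂ := by
    rw [inner_swap_of_adjoint hadjL, hLφ, inner_smul_left, inner_smul_right,
      inner_sum_apply_self_of_ccr hadj2 hccr2, hwφ, ← mul_assoc, map_neg, Complex.conj_I]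
    simp
  simp only [Finset.sum_add_distrib]
  have hnorm : ⟪φ, φ⟫_ℂ = (‖φ‖ : ℂ) ^ 2 := inner_self_eq_norm_sq_to_K φ
  rw [hdiag, hΛL, hnorm]
  ring

/-- pointwise Kähler linear algebra: on the space `V` of forms on a
Hermitian vector space of complex dimension `n` (with bigrading `P a b`, wedge operators
`w i = dz^i ∧ ·`, `bw i = dz̄^i ∧ ·`, contractions `c i = ι_{∂_i}`, `cbar i = ι_{∂_ī}` in a
unitary frame, Lefschetz operator `L` and adjoint `Lam`), for any `(p,q)`-form `φ` the
squared norm of the tensor `T_φ = ∑_{i,j} (∂_i⊗∂_j + ∂_j⊗∂_i) ⊗ ι_{∂_ī}(dz^j ∧ φ)`,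
namely `|T_φ|² = 2 ∑_{i,j} (⟨ψ_{ij}, ψ_{ij}⟩ + ⟨ψ_{ij}, ψ_{ji}⟩)` with
`ψ_{ij} = ι_{∂_ī}(dz^j ∧ φ)`, equals `2(q+1)(n−p)|φ|² − 2⟨ΛLφ, φ⟩`. -/
theorem stmt_12 (n p q : ℕ)
    (V : Type*) [NormedAddCommGroup V] [InnerProductSpace ℂ V]
    (P : ℤ → ℤ → Submodule ℂ V)
    (L Lam : Module.End ℂ V) (w bw c cbar : Fin n → Module.End ℂ V)
    (hw : ∀ i (a b : ℤ), ∀ x ∈ P a b, w i x ∈ P (a + 1) b)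
    (hbw : ∀ i (a b : ℤ), ∀ x ∈ P a b, bw i x ∈ P a (b + 1))
    (hc : ∀ i (a b : ℤ), ∀ x ∈ P a b, c i x ∈ P (a - 1) b)
    (hcbar : ∀ i (a b : ℤ), ∀ x ∈ P a b, cbar i x ∈ P a (b - 1))
    (hadj1 : ∀ i (x y : V), (inner ℂ (c i x) y : ℂ) = inner ℂ x (w i y))
    (hadj2 : ∀ i (x y : V), (inner ℂ (cbar i x) y : ℂ) = inner ℂ x (bw i y))
    (hadjL : ∀ x y : V, (inner ℂ (L x) y : ℂ) = inner ℂ x (Lam y))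
    (hccr1 : ∀ i j (x : V), c i (w j x) + w j (c i x) = if i = j then x else 0)
    (hccr2 : ∀ i j (x : V), cbar i (bw j x) + bw j (cbar i x) = if i = j then x else 0)
    (hccr3 : ∀ i j (x : V), c i (bw j x) + bw j (c i x) = 0)
    (hccr4 : ∀ i j (x : V), cbar i (w j x) + w j (cbar i x) = 0)
    (hLdef : ∀ x : V, L x = Complex.I • ∑ i, w i (bw i x))
    (hcount1 : ∀ (a b : ℤ), ∀ x ∈ P a b, ∑ i, w i (c i x) = (a : ℂ) • x)
    (hcount2 : ∀ (a b : ℤ), ∀ x ∈ P a b, ∑ i, bw i (cbar i x) = (b : ℂ) • x)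
    (φ : V) (hφ : φ ∈ P p q) :
    2 * ∑ i, ∑ j, ((inner ℂ (cbar i (w j φ)) (cbar i (w j φ)) : ℂ)
        + (inner ℂ (cbar i (w j φ)) (cbar j (w i φ)) : ℂ))
      = 2 * ((q : ℂ) + 1) * ((n : ℂ) - p) * ((‖φ‖ : ℂ)) ^ 2
        - 2 * (inner ℂ (Lam (L φ)) φ : ℂ) :=
  stmt_12_general n p q V P L Lam w bw c cbar hw hc hcbar hadj1 hadj2 hadjL hccr1 hccr2 hccr3 hccr4
    hLdef hcount1 hcount2 φ hφ
end
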